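/- arXiv:2502.09898 — 11 statements merged into one kernel-verified Lean document; each statement's English description precedes it below -/
import Mathlib

section
/- Let (φ_i)_{i∈I} be a finite frame for ℝ^n and let α ∈ ℝ^I be a fixed bias vector. Then the ReLU layer C_α : ℝ^n → ℝ^I, C_α(x) = (ReLU(⟨x,φ_i⟩ − α_i))_{i∈I}, is one-to-one on ℝ^n if and only if for every x ∈ ℝ^n the activated collection (φ_i)_{i∈I_α(x)} is a frame for ℝ^n (i.e., spans ℝ^n), where I_α(x) = {i ∈ I : ⟨x,φ_i⟩ ≥ α_i}. -/
/- Two inputs with the same ReLU output have equal inner products with every `φ i` that is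
activated at their midpoint, so if those vectors span, the inputs coincide. Conversely, if the
vectors activated at `x` miss a direction `u`, then moving `x` slightly along `u` leaves the
activated coordinates unchanged (they are orthogonal to `u`) and keeps the finitely many
inactive ones inactive, so the layer is not injective. -/

open RealInnerProductSpace
open Filter Topology Submodule

theorem Submodule.mem_orthogonal_span_iff {E : Type*} [NormedAddCommGroup E]
    [InnerProductSpace ℝ E] {s : Set E} {v : E} :
    v ∈ (span ℝ s)ᗮ ↔ ∀ u ∈ s, ⟪u, v⟫ = 0 := by
  refine ⟨fun hv u hu => (mem_orthogonal _ v).1 hv u (subset_span hu), fun h => ?_⟩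
  have : span ℝ s ≤ LinearMap.ker (innerₛₗ ℝ v) := span_le.2 fun u hu => by
    rw [SetLike.mem_coe, LinearMap.mem_ker, innerₛₗ_apply_apply, real_inner_comm]
    exact h u hu
  exact (mem_orthogonal' _ v).2 fun u hu => this hu

theorem max_zero_sub_eq_max_zero_sub_iff {a b c : ℝ} :
    max 0 (a - c) = max 0 (b - c) ↔ a = b ∨ a ≤ c ∧ b ≤ c := by
  grind

section ReLULayer

variable {ι E : Type*} [NormedAddCommGroup E] [InnerProductSpace ℝ E] (φ : ι → E) (α : ι → ℝ)

def reluLayer (x : E) : ι → ℝ := fun i => max 0 (⟪x, φ i⟫ - α i)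

def activeSet (x : E) : Set ι := {i | α i ≤ ⟪x, φ i⟫}

variable {φ α}

theorem reluLayer_eq_iff {x y : E} :
    reluLayer φ α x = reluLayer φ α y ↔
      ∀ i, ⟪x, φ i⟫ = ⟪y, φ i⟫ ∨ ⟪x, φ i⟫ ≤ α i ∧ ⟪y, φ i⟫ ≤ α i := by
  simp only [funext_iff, reluLayer, max_zero_sub_eq_max_zero_sub_iff]

theorem inner_eq_of_reluLayer_eq_of_mem_activeSet {x y : E}
    (h : reluLayer φ α x = reluLayer φ α y) {i : ι}
    (hi : i ∈ activeSet φ α ((2 : ℝ)⁻¹ • (x + y))) : ⟪x, φ i⟫ = ⟪y, φ i⟫ := by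
  rw [activeSet, Set.mem_ofPred_eq, real_inner_smul_left, inner_add_left] at hi
  rcases reluLayer_eq_iff.1 h i with h | ⟨hx, hy⟩
  · exact h
  · linarith

theorem reluLayer_injective_of_span_activeSet_eq_top
    (h : ∀ x, span ℝ (φ '' activeSet φ α x) = ⊤) : Function.Injective (reluLayer φ α) := by
  intro x y hxy
  have hortho : x - y ∈ (span ℝ (φ '' activeSet φ α ((2 : ℝ)⁻¹ • (x + y))))ᗮ := by
    refine mem_orthogonal_span_iff.2 ?_
    rintro _ ⟨i, hi, rfl⟩
    rw [real_inner_comm, inner_sub_left, inner_eq_of_reluLayer_eq_of_mem_activeSet hxy hi,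
      sub_self]
  rw [h, top_orthogonal_eq_bot, Submodule.mem_bot, sub_eq_zero] at hortho
  exact hortho

theorem eventually_reluLayer_add_smul_eq [Finite ι] {x u : E}
    (hu : ∀ i ∈ activeSet φ α x, ⟪u, φ i⟫ = 0) :
    ∀ᶠ t in 𝓝 (0 : ℝ), reluLayer φ α (x + t • u) = reluLayer φ α x := by
  have hinactive : ∀ᶠ t in 𝓝 (0 : ℝ), ∀ i, i ∉ activeSet φ α x → ⟪x + t • u, φ i⟫ < α i := by
    refine eventually_all.2 fun i => eventually_imp_distrib_left.2 fun hi => ?_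
    refine Tendsto.eventually_lt_const (not_le.1 hi) ?_
    exact Continuous.tendsto' (by fun_prop) 0 _ (by simp)
  refine hinactive.mono fun t ht => reluLayer_eq_iff.2 fun i => ?_
  by_cases hi : i ∈ activeSet φ α x
  · left
    rw [inner_add_left, real_inner_smul_left, hu i hi, mul_zero, add_zero]
  · exact .inr ⟨(ht i hi).le, (not_le.1 hi).le⟩

theorem span_activeSet_eq_top_of_injective [Finite ι] (h : Function.Injective (reluLayer φ α))
    (x : E) : span ℝ (φ '' activeSet φ α x) = ⊤ := by
  set K := span ℝ (φ '' activeSet φ α x)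
  have : FiniteDimensional ℝ K := FiniteDimensional.span_of_finite ℝ (Set.toFinite _)
  by_contra hK
  obtain ⟨u, hu, hu0⟩ := exists_mem_ne_zero_of_ne_bot (mt orthogonal_eq_bot_iff.1 hK)
  have hu_inner : ∀ i ∈ activeSet φ α x, ⟪u, φ i⟫ = 0 := fun i hi => by
    rw [real_inner_comm]
    exact mem_orthogonal_span_iff.1 hu _ ⟨i, hi, rfl⟩
  obtain ⟨t, ht, ht0⟩ : ∃ t : ℝ, reluLayer φ α (x + t • u) = reluLayer φ α x ∧ t ≠ 0 :=
    (((eventually_reluLayer_add_smul_eq hu_inner).filter_mono nhdsWithin_le_nhds).and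
      (self_mem_nhdsWithin : ∀ᶠ t in 𝓝[≠] (0 : ℝ), t ≠ 0)).exists
  have : t • u = 0 := by simpa using h ht
  exact (smul_ne_zero ht0 hu0) this

theorem reluLayer_injective_iff [Finite ι] :
    Function.Injective (reluLayer φ α) ↔ ∀ x, span ℝ (φ '' activeSet φ α x) = ⊤ :=
  ⟨span_activeSet_eq_top_of_injective, reluLayer_injective_of_span_activeSet_eq_top⟩

end ReLULayer

theorem relu_layer_injective_iff_general
    {n : ℕ} {ι : Type*} [Fintype ι]
    (φ : ι → EuclideanSpace ℝ (Fin n)) (α : ι → ℝ) :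
    Function.Injective
        (fun x : EuclideanSpace ℝ (Fin n) => fun i : ι => max 0 (⟪x, φ i⟫ - α i)) ↔
      ∀ x : EuclideanSpace ℝ (Fin n),
        Submodule.span ℝ (φ '' {i : ι | α i ≤ ⟪x, φ i⟫}) = ⊤ :=
  reluLayer_injective_iff

/-- A ReLU layer `C_α` associated with a finite frame `(φ_i)` for `ℝ^n`
and bias vector `α` is one-to-one if and only if for every `x` the activated
collection `(φ_i)_{i ∈ I_α(x)}` spans `ℝ^n`. -/
theorem relu_layer_injective_iff
    {n : ℕ} {ι : Type*} [Fintype ι]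
    (φ : ι → EuclideanSpace ℝ (Fin n)) (α : ι → ℝ)
    (hframe : Submodule.span ℝ (Set.range φ) = ⊤) :
    Function.Injective
        (fun x : EuclideanSpace ℝ (Fin n) => fun i : ι => max 0 (⟪x, φ i⟫ - α i)) ↔
      ∀ x : EuclideanSpace ℝ (Fin n),
        Submodule.span ℝ (φ '' {i : ι | α i ≤ ⟪x, φ i⟫}) = ⊤ :=
  relu_layer_injective_iff_general φ α
end

section
/- Let (φ_i)_{i∈I} be a finite frame for ℝ^n and let λ > 0 be a fixed saturation level. Then the saturated measurement operator S_λ : B → ℝ^I, S_λ(x) = (σ_λ(⟨x,φ_i⟩))_{i∈I}, is one-to-one on the closed unit ball B of ℝ^n if and only if for every x ∈ B the unsaturated collection (φ_i)_{i∈I_λ(x)} is a frame for ℝ^n (i.e., spans ℝ^n), where I_λ(x) = {i ∈ I : |⟨x,φ_i⟩| ≤ λ}. -/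
/-!
If `S x = S y`, then at every index unsaturated at the midpoint `(x + y) / 2` the two
coefficients have equal saturations and a sum of modulus at most `2λ`, which forces them to be
equal; so `x - y` is orthogonal to a spanning family and `x = y`. Conversely, if the unsaturated
vectors at `x` miss a unit vector `w` orthogonal to all of them, then `σ_λ` is locally constant
at every saturated coefficient of `x`, so for small `ε > 0` the two points `(1 - ε) x ± ε w` of
the ball have the same saturated measurements.
-/

open RealInnerProductSpace Filter Topology

noncomputable def saturation (lam t : ℝ) : ℝ := Real.sign t * min |t| lam

theorem saturation_eq_max_min {lam : ℝ} (hlam : 0 ≤ lam) (t : ℝ) :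
    saturation lam t = max (-lam) (min t lam) := by
  rcases lt_trichotomy t 0 with ht | rfl | ht
  · rw [saturation, Real.sign_of_neg ht, abs_of_neg ht]
    simp only [min_def, max_def]
    split_ifs <;> linarith
  · simp [saturation, hlam]
  · rw [saturation, Real.sign_of_pos ht, abs_of_pos ht]
    simp only [min_def, max_def]
    split_ifs <;> linarith

theorem eq_of_saturation_eq_of_abs_add_le {lam a b : ℝ} (hlam : 0 < lam)
    (hab : |a + b| ≤ 2 * lam) (h : saturation lam a = saturation lam b) : a = b := by
  rw [saturation_eq_max_min hlam.le, saturation_eq_max_min hlam.le] at h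
  rw [abs_le] at hab
  simp only [min_def, max_def] at h
  split_ifs at h <;> linarith

theorem saturation_eventuallyEq_of_lt_abs {lam a : ℝ} (hlam : 0 ≤ lam) (ha : lam < |a|) :
    saturation lam =ᶠ[𝓝 a] fun _ => saturation lam a := by
  simp only [EventuallyEq, saturation_eq_max_min hlam, min_def, max_def]
  rcases lt_abs.mp ha with ha | ha
  · filter_upwards [lt_mem_nhds ha] with t ht
    split_ifs <;> linarith
  · filter_upwards [gt_mem_nhds (lt_neg_of_lt_neg ha)] with t ht
    split_ifs <;> linarith

theorem eq_of_inner_eq_of_span_eq_top {E : Type*} [NormedAddCommGroup E] [InnerProductSpace ℝ E]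
    {s : Set E} (hs : Submodule.span ℝ s = ⊤) {x y : E} (h : ∀ v ∈ s, ⟪x, v⟫ = ⟪y, v⟫) :
    x = y :=
  ext_inner_right ℝ fun v =>
    LinearMap.congr_fun (LinearMap.ext_on (f := innerₛₗ ℝ x) (g := innerₛₗ ℝ y) hs h) v

theorem Submodule.exists_norm_eq_one_mem_orthogonal {E : Type*} [NormedAddCommGroup E]
    [InnerProductSpace ℝ E] {K : Submodule ℝ E} [K.HasOrthogonalProjection] (hK : K ≠ ⊤) :
    ∃ w ∈ Kᗮ, ‖w‖ = 1 := by
  obtain ⟨u, hu, hu0⟩ :=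
    Submodule.exists_mem_ne_zero_of_ne_bot (mt K.orthogonal_eq_bot_iff.mp hK)
  exact ⟨‖u‖⁻¹ • u, Kᗮ.smul_mem _ hu, norm_smul_inv_norm hu0⟩

section SaturatedMeasurement

variable {E ι : Type*} [NormedAddCommGroup E] [InnerProductSpace ℝ E] (φ : ι → E) (lam : ℝ)

noncomputable def saturatedMeasurement (x : E) : ι → ℝ := fun i => saturation lam ⟪x, φ i⟫

def unsaturatedIndices (x : E) : Set ι := {i | |⟪x, φ i⟫| ≤ lam}

variable {φ lam}

theorem injOn_saturatedMeasurement_of_span_eq_top {s : Set E} (hs : Convex ℝ s)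
    (hlam : 0 < lam) (hspan : ∀ x ∈ s, Submodule.span ℝ (φ '' unsaturatedIndices φ lam x) = ⊤) :
    Set.InjOn (saturatedMeasurement φ lam) s := by
  intro x hx y hy hxy
  set z : E := (1 / 2 : ℝ) • x + (1 / 2 : ℝ) • y
  have hz : z ∈ s := hs hx hy (by norm_num) (by norm_num) (by norm_num)
  refine eq_of_inner_eq_of_span_eq_top (hspan z hz) ?_
  rintro _ ⟨i, hi, rfl⟩
  refine eq_of_saturation_eq_of_abs_add_le hlam ?_ (congrFun hxy i)
  have hzi : ⟪z, φ i⟫ = (⟪x, φ i⟫ + ⟪y, φ i⟫) / 2 := by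
    simp only [z, inner_add_left, real_inner_smul_left]; ring
  have hi : |⟪z, φ i⟫| ≤ lam := hi
  rw [hzi, abs_div, abs_two] at hi
  linarith

theorem inner_lineMap_left (x y v : E) (ε : ℝ) :
    ⟪AffineMap.lineMap x y ε, v⟫ = (1 - ε) * ⟪x, v⟫ + ε * ⟪y, v⟫ := by
  rw [AffineMap.lineMap_apply_module, inner_add_left, real_inner_smul_left, real_inner_smul_left]

theorem eventually_saturation_inner_lineMap_eq (hlam : 0 ≤ lam) {x v : E} (h : lam < |⟪x, v⟫|)
    (y : E) :
    ∀ᶠ ε in 𝓝 (0 : ℝ), saturation lam ⟪AffineMap.lineMap x y ε, v⟫ = saturation lam ⟪x, v⟫ :=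
  have hcont : Tendsto (fun ε : ℝ => ⟪AffineMap.lineMap x y ε, v⟫) (𝓝 0) (𝓝 ⟪x, v⟫) :=
    (AffineMap.lineMap_continuous.inner continuous_const).tendsto' 0 _ (by simp)
  hcont.eventually (saturation_eventuallyEq_of_lt_abs hlam h)

theorem not_injOn_saturatedMeasurement_of_span_ne_top [Finite ι] (hlam : 0 ≤ lam) {x : E}
    (hx : x ∈ Metric.closedBall 0 1)
    (hspan : Submodule.span ℝ (φ '' unsaturatedIndices φ lam x) ≠ ⊤) :
    ¬ Set.InjOn (saturatedMeasurement φ lam) (Metric.closedBall 0 1) := by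
  have : FiniteDimensional ℝ (Submodule.span ℝ (φ '' unsaturatedIndices φ lam x)) :=
    FiniteDimensional.span_of_finite ℝ (Set.toFinite _)
  obtain ⟨w, hwK, hw⟩ := Submodule.exists_norm_eq_one_mem_orthogonal hspan
  have horth : ∀ i ∈ unsaturatedIndices φ lam x, ⟪w, φ i⟫ = 0 := fun i hi =>
    (Submodule.mem_orthogonal' _ w).mp hwK _ (Submodule.subset_span ⟨i, hi, rfl⟩)
  have hagree : ∀ i, ∀ᶠ ε in 𝓝[>] (0 : ℝ),
      saturatedMeasurement φ lam (AffineMap.lineMap x w ε) i =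
        saturatedMeasurement φ lam (AffineMap.lineMap x (-w) ε) i := by
    intro i
    by_cases hi : i ∈ unsaturatedIndices φ lam x
    · refine .of_forall fun ε => ?_
      simp only [saturatedMeasurement, inner_lineMap_left, inner_neg_left, horth i hi, neg_zero]
    · refine nhdsWithin_le_nhds ?_
      have hi : lam < |⟪x, φ i⟫| := not_le.mp hi
      filter_upwards [eventually_saturation_inner_lineMap_eq hlam hi w,
        eventually_saturation_inner_lineMap_eq hlam hi (-w)] with ε h₁ h₂
      exact h₁.trans h₂.symm
  obtain ⟨ε, hS, hε0, hε1⟩ :=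
    ((eventually_all.mpr hagree).and (Ioo_mem_nhdsGT one_pos)).exists
  have hε : ε ∈ Set.Icc (0 : ℝ) 1 := ⟨hε0.le, hε1.le⟩
  have hwB : w ∈ Metric.closedBall (0 : E) 1 := by simp [hw]
  have hnwB : -w ∈ Metric.closedBall (0 : E) 1 := by simp [hw]
  intro hinj
  have heq := hinj ((convex_closedBall 0 1).lineMap_mem hx hwB hε)
    ((convex_closedBall 0 1).lineMap_mem hx hnwB hε) (funext hS)
  rw [AffineMap.lineMap_apply_module, AffineMap.lineMap_apply_module, add_right_inj,
    smul_right_injective E hε0.ne' |>.eq_iff, eq_neg_iff_add_eq_zero, ← two_smul ℝ,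
    smul_eq_zero] at heq
  norm_num [heq.resolve_left two_ne_zero] at hw

end SaturatedMeasurement

theorem saturation_injective_iff_general
    {n : ℕ} {ι : Type*} [Fintype ι]
    (φ : ι → EuclideanSpace ℝ (Fin n)) (lam : ℝ) (hlam : 0 < lam) :
    Set.InjOn
        (fun x : EuclideanSpace ℝ (Fin n) =>
          fun i : ι => Real.sign ⟪x, φ i⟫ * min |⟪x, φ i⟫| lam)
        (Metric.closedBall (0 : EuclideanSpace ℝ (Fin n)) 1) ↔
      ∀ x ∈ Metric.closedBall (0 : EuclideanSpace ℝ (Fin n)) 1,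
        Submodule.span ℝ (φ '' {i : ι | |⟪x, φ i⟫| ≤ lam}) = ⊤ :=
  ⟨fun hinj _ hx => by_contra fun hspan =>
      not_injOn_saturatedMeasurement_of_span_ne_top hlam.le hx hspan hinj,
    injOn_saturatedMeasurement_of_span_eq_top (convex_closedBall 0 1) hlam⟩

/-- The saturated measurement operator `S_λ` associated with a finite frame
`(φ_i)` for `ℝ^n` and saturation level `λ > 0` is one-to-one on the closed unit ball
if and only if for every `x` in the ball the unsaturated collection spans `ℝ^n`. -/
theorem saturation_injective_iff
    {n : ℕ} {ι : Type*} [Fintype ι]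
    (φ : ι → EuclideanSpace ℝ (Fin n)) (lam : ℝ) (hlam : 0 < lam)
    (hframe : Submodule.span ℝ (Set.range φ) = ⊤) :
    Set.InjOn
        (fun x : EuclideanSpace ℝ (Fin n) =>
          fun i : ι => Real.sign ⟪x, φ i⟫ * min |⟪x, φ i⟫| lam)
        (Metric.closedBall (0 : EuclideanSpace ℝ (Fin n)) 1) ↔
      ∀ x ∈ Metric.closedBall (0 : EuclideanSpace ℝ (Fin n)) 1,
        Submodule.span ℝ (φ '' {i : ι | |⟪x, φ i⟫| ≤ lam}) = ⊤ :=
  saturation_injective_iff_general φ lam hlam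
end

section
/- Let (φ_i)_{i∈I} be a finite frame for ℝ^n and let μ > 0 be a fixed gating level. Then the gated measurement operator G_μ : {x ∈ ℝ^n : ‖x‖ ≥ 1} → ℝ^I, G_μ(x) = (γ_μ(⟨x,φ_i⟩))_{i∈I}, is one-to-one on {x ∈ ℝ^n : ‖x‖ ≥ 1} if and only if for every x with ‖x‖ ≥ 1 the gated collection (φ_i)_{i∈I_μ(x)} is a frame for ℝ^n (i.e., spans ℝ^n), where I_μ(x) = {i ∈ I : |⟨x,φ_i⟩| ≥ μ}. -/
/-!
If the gated directions at `x` fail to span, pick `z ≠ 0` orthogonal to all of them with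
`⟪x, z⟫ ≥ 0`. Moving from `x` to `x + t • z` does not change the gated measurements, and for
small `t > 0` it does not push any ungated measurement up to the threshold `μ`; since it also
does not decrease the norm, injectivity fails. Conversely, equal gated measurements of `x` and
`y` force `x - y` to be orthogonal to every gated direction at `x`, hence `x = y` when these span.
-/

open RealInnerProductSpace Filter Topology

section Gating

variable {E : Type*} [NormedAddCommGroup E] [InnerProductSpace ℝ E]

theorem norm_le_norm_add_smul {x z : E} (hxz : 0 ≤ ⟪x, z⟫) {t : ℝ} (ht : 0 ≤ t) :
    ‖x‖ ≤ ‖x + t • z‖ := by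
  refine (pow_le_pow_iff_left₀ (norm_nonneg _) (norm_nonneg _) two_ne_zero).mp ?_
  rw [norm_add_sq_real, real_inner_smul_right]
  nlinarith [mul_nonneg ht hxz, sq_nonneg ‖t • z‖]

theorem Submodule.exists_mem_orthogonal_ne_zero_inner_nonneg {K : Submodule ℝ E}
    [K.HasOrthogonalProjection] (hK : K ≠ ⊤) (x : E) : ∃ z ∈ Kᗮ, z ≠ 0 ∧ 0 ≤ ⟪x, z⟫ := by
  obtain ⟨w, hw, hw0⟩ :=
    Submodule.exists_mem_ne_zero_of_ne_bot (mt Submodule.orthogonal_eq_bot_iff.mp hK)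
  rcases le_total 0 ⟪x, w⟫ with hxw | hxw
  · exact ⟨w, hw, hw0, hxw⟩
  · exact ⟨-w, Kᗮ.neg_mem hw, neg_ne_zero.mpr hw0, by rwa [inner_neg_right, neg_nonneg]⟩

variable {ι : Type*} (φ : ι → E) (μ : ℝ)

noncomputable def gatedMeasurement (x : E) (i : ι) : ℝ :=
  if μ ≤ |⟪x, φ i⟫| then ⟪x, φ i⟫ else 0

def gatedIndices (x : E) : Set ι :=
  {i | μ ≤ |⟪x, φ i⟫|}

variable {φ μ}

theorem inner_sub_eq_zero_of_gatedMeasurement_eq {x y : E}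
    (hxy : gatedMeasurement φ μ x = gatedMeasurement φ μ y) {i : ι}
    (hi : i ∈ gatedIndices φ μ x) : ⟪x - y, φ i⟫ = 0 := by
  have hx : μ ≤ |⟪x, φ i⟫| := hi
  have hxy_i := congrFun hxy i
  simp only [gatedMeasurement, if_pos hx] at hxy_i
  by_cases hy : μ ≤ |⟪y, φ i⟫|
  · rw [if_pos hy] at hxy_i
    rw [inner_sub_left, hxy_i, sub_self]
  · -- a zero reading passed the gate at `x`, so `μ ≤ 0` and the gate at `y` is open as well
    rw [if_neg hy] at hxy_i
    exact absurd (hx.trans (by rw [hxy_i, abs_zero]; exact abs_nonneg _)) hy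

theorem eq_of_gatedMeasurement_eq {x y : E}
    (hxy : gatedMeasurement φ μ x = gatedMeasurement φ μ y)
    (hspan : Submodule.span ℝ (φ '' gatedIndices φ μ x) = ⊤) : x = y := by
  have hle : Submodule.span ℝ (φ '' gatedIndices φ μ x) ≤ (ℝ ∙ (x - y))ᗮ := by
    rw [Submodule.span_le]
    rintro _ ⟨i, hi, rfl⟩
    exact Submodule.mem_orthogonal_singleton_iff_inner_right.mpr
      (inner_sub_eq_zero_of_gatedMeasurement_eq hxy hi)
  rw [hspan, top_le_iff, Submodule.orthogonal_eq_top_iff,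
    Submodule.span_singleton_eq_bot, sub_eq_zero] at hle
  exact hle

theorem injOn_gatedMeasurement_of_span_eq_top {s : Set E}
    (hspan : ∀ x ∈ s, Submodule.span ℝ (φ '' gatedIndices φ μ x) = ⊤) :
    Set.InjOn (gatedMeasurement φ μ) s :=
  fun x hx _ _ hxy => eq_of_gatedMeasurement_eq hxy (hspan x hx)

theorem eventually_gatedMeasurement_add_smul_eq [Finite ι] {x z : E}
    (hz : ∀ i ∈ gatedIndices φ μ x, ⟪z, φ i⟫ = 0) :
    ∀ᶠ t : ℝ in 𝓝 0, gatedMeasurement φ μ (x + t • z) = gatedMeasurement φ μ x := by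
  have hinner : ∀ i t, ⟪x + t • z, φ i⟫ = ⟪x, φ i⟫ + t * ⟪z, φ i⟫ := fun i t => by
    rw [inner_add_left, real_inner_smul_left]
  simp only [funext_iff, eventually_all]
  intro i
  by_cases hi : i ∈ gatedIndices φ μ x
  · refine Eventually.of_forall fun t => ?_
    simp only [gatedMeasurement, hinner, hz i hi, mul_zero, add_zero]
  · have hlt : |⟪x, φ i⟫| < μ := not_le.mp hi
    have hcont : Continuous fun t : ℝ => |⟪x, φ i⟫ + t * ⟪z, φ i⟫| := by fun_prop
    have hlim := hcont.tendsto 0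
    simp only [zero_mul, add_zero] at hlim
    filter_upwards [hlim.eventually_lt_const hlt] with t ht
    simp only [gatedMeasurement, hinner, if_neg (not_le.mpr ht), if_neg (not_le.mpr hlt)]

theorem span_gatedIndices_eq_top_of_injOn [Finite ι] {r : ℝ}
    (hinj : Set.InjOn (gatedMeasurement φ μ) {x | r ≤ ‖x‖}) {x : E} (hx : r ≤ ‖x‖) :
    Submodule.span ℝ (φ '' gatedIndices φ μ x) = ⊤ := by
  set K := Submodule.span ℝ (φ '' gatedIndices φ μ x)
  have : FiniteDimensional ℝ K := FiniteDimensional.span_of_finite ℝ (Set.toFinite _)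
  by_contra hK
  obtain ⟨z, hzK, hz0, hxz⟩ := K.exists_mem_orthogonal_ne_zero_inner_nonneg hK x
  have hz : ∀ i ∈ gatedIndices φ μ x, ⟪z, φ i⟫ = 0 := fun i hi =>
    K.inner_left_of_mem_orthogonal (Submodule.subset_span ⟨i, hi, rfl⟩) hzK
  have hsmall : ∀ᶠ t in 𝓝[>] (0 : ℝ),
      gatedMeasurement φ μ (x + t • z) = gatedMeasurement φ μ x ∧ 0 < t :=
    ((eventually_gatedMeasurement_add_smul_eq hz).filter_mono nhdsWithin_le_nhds).and
      self_mem_nhdsWithin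
  obtain ⟨t, hxt, ht⟩ := hsmall.exists
  have hnorm : r ≤ ‖x + t • z‖ := hx.trans (norm_le_norm_add_smul hxz ht.le)
  have htz : t • z = 0 := by simpa using hinj hnorm hx hxt
  exact (smul_ne_zero ht.ne' hz0) htz

end Gating

theorem gating_injective_iff_general
    {n : ℕ} {ι : Type*} [Fintype ι]
    (φ : ι → EuclideanSpace ℝ (Fin n)) (μ : ℝ) :
    Set.InjOn
        (fun x : EuclideanSpace ℝ (Fin n) =>
          fun i : ι => if μ ≤ |⟪x, φ i⟫| then ⟪x, φ i⟫ else 0)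
        {x : EuclideanSpace ℝ (Fin n) | 1 ≤ ‖x‖} ↔
      ∀ x : EuclideanSpace ℝ (Fin n), 1 ≤ ‖x‖ →
        Submodule.span ℝ (φ '' {i : ι | μ ≤ |⟪x, φ i⟫|}) = ⊤ :=
  ⟨fun hinj _ hx => span_gatedIndices_eq_top_of_injOn hinj hx,
    injOn_gatedMeasurement_of_span_eq_top⟩

/-- The gated measurement operator `G_μ` associated with a finite frame
`(φ_i)` for `ℝ^n` and gating level `μ > 0` is one-to-one on `{x : ‖x‖ ≥ 1}` if and
only if for every `x` with `‖x‖ ≥ 1` the gated collection spans `ℝ^n`. -/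
theorem gating_injective_iff
    {n : ℕ} {ι : Type*} [Fintype ι]
    (φ : ι → EuclideanSpace ℝ (Fin n)) (μ : ℝ) (hμ : 0 < μ)
    (hframe : Submodule.span ℝ (Set.range φ) = ⊤) :
    Set.InjOn
        (fun x : EuclideanSpace ℝ (Fin n) =>
          fun i : ι => if μ ≤ |⟪x, φ i⟫| then ⟪x, φ i⟫ else 0)
        {x : EuclideanSpace ℝ (Fin n) | 1 ≤ ‖x‖} ↔
      ∀ x : EuclideanSpace ℝ (Fin n), 1 ≤ ‖x‖ →
        Submodule.span ℝ (φ '' {i : ι | μ ≤ |⟪x, φ i⟫|}) = ⊤ :=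
  gating_injective_iff_general φ μ
end

section
/- Let (φ_i)_{i∈I} be a finite frame for ℝ^n. The following are equivalent: (i) the intensity measurement operator is one-to-one up to sign, i.e., whenever x, y ∈ ℝ^n satisfy |⟨x,φ_i⟩| = |⟨y,φ_i⟩| for all i ∈ I, then x = y or x = −y; (ii) for every subset J ⊆ I, either (φ_i)_{i∈J} or (φ_i)_{i∈I∖J} is a frame for ℝ^n; (ii*) for every pair x, y ∈ ℝ^n, either (φ_i)_{i∈I⁺(x,y)} or (φ_i)_{i∈I⁻(x,y)} is a frame for ℝ^n, where I⁺(x,y) = {i ∈ I : ⟨x,φ_i⟩⟨y,φ_i⟩ ≥ 0} and I⁻(x,y) = {i ∈ I : ⟨x,φ_i⟩⟨y,φ_i⟩ ≤ 0}. -/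
/-!
If `x` and `y` have the same intensity measurements, then on `I⁺(x, y)` the frame vectors are
orthogonal to `x - y` and on `I⁻(x, y)` to `x + y`; so if either family spans, `x = ±y`.
Conversely, if neither `(φ i)_{i ∈ J}` nor `(φ i)_{i ∉ J}` spans, pick `u ≠ 0` orthogonal to the
first and `v ≠ 0` orthogonal to the second: `u + v` and `u - v` have the same intensity
measurements without being equal up to sign.
-/

open RealInnerProductSpace

theorem eq_of_abs_eq_of_mul_nonneg {a b : ℝ} (h : |a| = |b|) (hab : 0 ≤ a * b) : a = b := by
  rcases abs_eq_abs.mp h with h | rfl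
  · exact h
  · have : b = 0 := by nlinarith
    simp [this]

theorem eq_neg_of_abs_eq_of_mul_nonpos {a b : ℝ} (h : |a| = |b|) (hab : a * b ≤ 0) : a = -b :=
  eq_of_abs_eq_of_mul_nonneg (by rw [h, abs_neg]) (by linarith)

section

variable {E ι : Type*} [NormedAddCommGroup E] [InnerProductSpace ℝ E]

theorem Submodule.mem_orthogonal_span_image_iff (φ : ι → E) (S : Set ι) (z : E) :
    z ∈ (span ℝ (φ '' S))ᗮ ↔ ∀ i ∈ S, ⟪z, φ i⟫ = 0 := by
  rw [← span_singleton_le_iff_mem, ← isOrtho_iff_le, isOrtho_span]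
  simp

variable [FiniteDimensional ℝ E] (φ : ι → E)

theorem Submodule.span_image_eq_top_iff (S : Set ι) :
    span ℝ (φ '' S) = ⊤ ↔ ∀ z : E, (∀ i ∈ S, ⟪z, φ i⟫ = 0) → z = 0 := by
  simp only [← orthogonal_eq_bot_iff, eq_bot_iff, SetLike.le_def, mem_orthogonal_span_image_iff,
    mem_bot]

theorem span_image_eq_top_or_compl_of_abs_inner_injective
    (hinj : ∀ x y : E, (∀ i, |⟪x, φ i⟫| = |⟪y, φ i⟫|) → x = y ∨ x = -y) (J : Set ι) :
    Submodule.span ℝ (φ '' J) = ⊤ ∨ Submodule.span ℝ (φ '' Jᶜ) = ⊤ := by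
  simp only [Submodule.span_image_eq_top_iff]
  by_contra! ⟨⟨u, hu, hu0⟩, ⟨v, hv, hv0⟩⟩
  have habs : ∀ i, |⟪u + v, φ i⟫| = |⟪u - v, φ i⟫| := by
    intro i
    by_cases hi : i ∈ J
    · simp [inner_add_left, inner_sub_left, hu i hi]
    · simp [inner_add_left, inner_sub_left, hv i hi]
  have := IsAddTorsionFree.of_isTorsionFree ℝ E
  rcases hinj _ _ habs with h | h
  · exact hv0 (self_eq_neg.mp (add_left_cancel (h.trans (sub_eq_add_neg u v))))
  · refine hu0 (self_eq_neg.mp (add_right_cancel (b := v) ?_))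
    rw [h, neg_sub, sub_eq_neg_add]

theorem eq_or_eq_neg_of_abs_inner_eq {x y : E}
    (hspan : Submodule.span ℝ (φ '' {i | 0 ≤ ⟪x, φ i⟫ * ⟪y, φ i⟫}) = ⊤ ∨
      Submodule.span ℝ (φ '' {i | ⟪x, φ i⟫ * ⟪y, φ i⟫ ≤ 0}) = ⊤)
    (habs : ∀ i, |⟪x, φ i⟫| = |⟪y, φ i⟫|) : x = y ∨ x = -y := by
  simp only [Submodule.span_image_eq_top_iff] at hspan
  rcases hspan with h | h
  · refine .inl (sub_eq_zero.mp (h _ fun i hi => ?_))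
    rw [inner_sub_left, eq_of_abs_eq_of_mul_nonneg (habs i) hi, sub_self]
  · refine .inr (eq_neg_of_add_eq_zero_left (h _ fun i hi => ?_))
    rw [inner_add_left, eq_neg_of_abs_eq_of_mul_nonpos (habs i) hi, neg_add_cancel]

end

theorem phase_retrieval_injective_tfae_general
    {n : ℕ} {ι : Type*}
    (φ : ι → EuclideanSpace ℝ (Fin n)) :
    List.TFAE
      [ (∀ x y : EuclideanSpace ℝ (Fin n),
          (∀ i : ι, |⟪x, φ i⟫| = |⟪y, φ i⟫|) → x = y ∨ x = -y),
        (∀ J : Set ι,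
          Submodule.span ℝ (φ '' J) = ⊤ ∨ Submodule.span ℝ (φ '' Jᶜ) = ⊤),
        (∀ x y : EuclideanSpace ℝ (Fin n),
          Submodule.span ℝ (φ '' {i : ι | 0 ≤ ⟪x, φ i⟫ * ⟪y, φ i⟫}) = ⊤ ∨
            Submodule.span ℝ (φ '' {i : ι | ⟪x, φ i⟫ * ⟪y, φ i⟫ ≤ 0}) = ⊤) ] := by
  tfae_have 1 → 2 := span_image_eq_top_or_compl_of_abs_inner_injective φ
  tfae_have 2 → 3 := fun h x y => (h _).imp_right fun hc =>
    top_unique <| hc.ge.trans <| Submodule.span_mono <| Set.image_mono fun i (hi : ¬0 ≤ ⟪x, φ i⟫ * ⟪y, φ i⟫) =>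
      le_of_not_ge hi
  tfae_have 3 → 1 := fun h x y => eq_or_eq_neg_of_abs_inner_eq φ (h x y)
  tfae_finish

/-- For a finite frame `(φ_i)` for `ℝ^n`, the following are equivalent:
(i) the intensity measurement operator is one-to-one up to sign;
(ii) the complement property: for every `J ⊆ I`, `(φ_i)_{i∈J}` or `(φ_i)_{i∈I∖J}`
spans `ℝ^n`;
(ii*) for every pair `x, y`, `(φ_i)_{i∈I⁺(x,y)}` or `(φ_i)_{i∈I⁻(x,y)}` spans `ℝ^n`. -/
theorem phase_retrieval_injective_tfae
    {n : ℕ} {ι : Type*} [Fintype ι]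
    (φ : ι → EuclideanSpace ℝ (Fin n))
    (hframe : Submodule.span ℝ (Set.range φ) = ⊤) :
    List.TFAE
      [ (∀ x y : EuclideanSpace ℝ (Fin n),
          (∀ i : ι, |⟪x, φ i⟫| = |⟪y, φ i⟫|) → x = y ∨ x = -y),
        (∀ J : Set ι,
          Submodule.span ℝ (φ '' J) = ⊤ ∨ Submodule.span ℝ (φ '' Jᶜ) = ⊤),
        (∀ x y : EuclideanSpace ℝ (Fin n),
          Submodule.span ℝ (φ '' {i : ι | 0 ≤ ⟪x, φ i⟫ * ⟪y, φ i⟫}) = ⊤ ∨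
            Submodule.span ℝ (φ '' {i : ι | ⟪x, φ i⟫ * ⟪y, φ i⟫ ≤ 0}) = ⊤) ] :=
  phase_retrieval_injective_tfae_general φ
end

section
/- Let (φ_i)_{i∈I} be a finite family of vectors in ℝ^n, let α ∈ ℝ^I be a bias vector, and let x, y ∈ ℝ^n. If A ≥ 0 satisfies A‖z‖² ≤ Σ_{i∈I_α((x+y)/2)} |⟨z,φ_i⟩|² for all z ∈ ℝ^n (i.e., A is a lower frame bound of the collection activated at the midpoint (x+y)/2), then (1/4)·A·‖x−y‖² ≤ ‖C_α(x) − C_α(y)‖². -/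
/-!
At an index activated at the midpoint the two preactivations `a = ⟪x, φ i⟫ - α i` and
`b = ⟪y, φ i⟫ - α i` satisfy `a + b ≥ 0`, and then the ReLU shrinks `|a - b|` by at most a factor
two: if `a, b ≥ 0` nothing changes, and if `b < 0 ≤ a` then `a ≥ (a - b) / 2`. Summing squares over
the activated indices and applying the lower frame bound to `x - y` gives the estimate.
-/

open RealInnerProductSpace Finset

theorem sq_half_sub_le_sq_max_zero_sub_max_zero {a b : ℝ} (hab : 0 ≤ a + b) :
    ((a - b) / 2) ^ 2 ≤ (max 0 a - max 0 b) ^ 2 := by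
  rcases le_or_gt 0 a with ha | ha <;> rcases le_or_gt 0 b with hb | hb
  · rw [max_eq_right ha, max_eq_right hb]
    nlinarith [sq_nonneg (a - b)]
  · rw [max_eq_right ha, max_eq_left hb.le]
    nlinarith
  · rw [max_eq_left ha.le, max_eq_right hb]
    nlinarith
  · linarith

theorem sq_half_inner_sub_le_sq_relu_sub {E : Type*} [NormedAddCommGroup E]
    [InnerProductSpace ℝ E] {x y v : E} {c : ℝ} (hc : c ≤ ⟪(2 : ℝ)⁻¹ • (x + y), v⟫) :
    (⟪x - y, v⟫ / 2) ^ 2 ≤ (max 0 (⟪x, v⟫ - c) - max 0 (⟪y, v⟫ - c)) ^ 2 := by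
  rw [real_inner_smul_left, inner_add_left] at hc
  have key := sq_half_sub_le_sq_max_zero_sub_max_zero
    (a := ⟪x, v⟫ - c) (b := ⟪y, v⟫ - c) (by linarith)
  rwa [inner_sub_left, ← sub_sub_sub_cancel_right _ _ c]

theorem relu_layer_midpoint_lower_bound_general
    {n : ℕ} {ι : Type*} [Fintype ι]
    (φ : ι → EuclideanSpace ℝ (Fin n)) (α : ι → ℝ)
    (C : EuclideanSpace ℝ (Fin n) → EuclideanSpace ℝ ι)
    (hC : ∀ x, C x = fun i : ι => max 0 (⟪x, φ i⟫ - α i))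
    (x y : EuclideanSpace ℝ (Fin n)) (A : ℝ)
    (hlow : ∀ z : EuclideanSpace ℝ (Fin n),
      A * ‖z‖ ^ 2 ≤
        ∑ i ∈ univ.filter (fun i : ι => α i ≤ ⟪(2 : ℝ)⁻¹ • (x + y), φ i⟫),
          ⟪z, φ i⟫ ^ 2) :
    (1 / 4) * A * ‖x - y‖ ^ 2 ≤ ‖C x - C y‖ ^ 2 := by
  set S := univ.filter (fun i : ι => α i ≤ ⟪(2 : ℝ)⁻¹ • (x + y), φ i⟫)
  calc (1 / 4) * A * ‖x - y‖ ^ 2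
      ≤ (1 / 4) * ∑ i ∈ S, ⟪x - y, φ i⟫ ^ 2 := by
        rw [mul_assoc]
        exact mul_le_mul_of_nonneg_left (hlow (x - y)) (by norm_num)
    _ = ∑ i ∈ S, (⟪x - y, φ i⟫ / 2) ^ 2 := by
        rw [mul_sum]
        exact sum_congr rfl fun i _ => by ring
    _ ≤ ∑ i ∈ S, (C x i - C y i) ^ 2 := sum_le_sum fun i hi => by
        simpa only [hC] using sq_half_inner_sub_le_sq_relu_sub (mem_filter.1 hi).2
    _ ≤ ∑ i, (C x i - C y i) ^ 2 :=
        sum_le_sum_of_subset_of_nonneg (subset_univ S) fun i _ _ => sq_nonneg _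
    _ = ‖C x - C y‖ ^ 2 := by rw [EuclideanSpace.real_norm_sq_eq]; rfl

/-- If `A` is a lower frame bound of the collection of frame vectors
activated at the midpoint `(x+y)/2`, then
`(1/4)·A·‖x−y‖² ≤ ‖C_α(x) − C_α(y)‖²` for the ReLU layer `C_α`. -/
theorem relu_layer_midpoint_lower_bound
    {n : ℕ} {ι : Type*} [Fintype ι]
    (φ : ι → EuclideanSpace ℝ (Fin n)) (α : ι → ℝ)
    (C : EuclideanSpace ℝ (Fin n) → EuclideanSpace ℝ ι)
    (hC : ∀ x, C x = fun i : ι => max 0 (⟪x, φ i⟫ - α i))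
    (x y : EuclideanSpace ℝ (Fin n)) (A : ℝ) (hA : 0 ≤ A)
    (hlow : ∀ z : EuclideanSpace ℝ (Fin n),
      A * ‖z‖ ^ 2 ≤
        ∑ i ∈ univ.filter (fun i : ι => α i ≤ ⟪(2 : ℝ)⁻¹ • (x + y), φ i⟫),
          ⟪z, φ i⟫ ^ 2) :
    (1 / 4) * A * ‖x - y‖ ^ 2 ≤ ‖C x - C y‖ ^ 2 :=
  relu_layer_midpoint_lower_bound_general φ α C hC x y A hlow
end

section
/- Let (φ_i)_{i∈I} be a finite family of vectors in ℝ^n and let α ∈ ℝ^I be a bias vector. If A ≥ 0 satisfies A‖z‖² ≤ Σ_{i∈I_α(x)} |⟨z,φ_i⟩|² for every x ∈ ℝ^n and every z ∈ ℝ^n (i.e., A is a lower frame bound of every activated collection), then the ReLU layer C_α satisfies (1/2)·√A·‖x−y‖ ≤ ‖C_α(x) − C_α(y)‖ for all x, y ∈ ℝ^n. -/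
/-!
If `⟨x, φ i⟩ - α i` and `⟨y, φ i⟩ - α i` have a nonnegative sum, i.e. if `i` is activated at the
midpoint of `x` and `y`, then the ReLU shrinks their difference by at most a factor `2`.
Summing over the collection activated at the midpoint and applying its lower frame bound to
`z = x - y` gives `A ‖x - y‖² ≤ 4 ‖C_α x - C_α y‖²`.
-/

open RealInnerProductSpace Finset

theorem sq_sub_le_four_mul_sq_max_zero_sub {a b : ℝ} (h : 0 ≤ a + b) :
    (a - b) ^ 2 ≤ 4 * (max 0 a - max 0 b) ^ 2 := by
  rcases le_total a 0 with ha | ha <;> rcases le_total b 0 with hb | hb <;>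
    simp only [max_eq_left, max_eq_right, ha, hb] <;> nlinarith

section ActivatedSet

variable {E ι : Type*} [NormedAddCommGroup E] [InnerProductSpace ℝ E] [Fintype ι]

noncomputable def activatedSet (φ : ι → E) (α : ι → ℝ) (x : E) : Finset ι :=
  univ.filter fun i => α i ≤ ⟪x, φ i⟫

theorem sq_inner_sub_le_of_mem_activatedSet_midpoint {φ : ι → E} {α : ι → ℝ} {x y : E} {i : ι}
    (hi : i ∈ activatedSet φ α (midpoint ℝ x y)) :
    ⟪x - y, φ i⟫ ^ 2 ≤ 4 * (max 0 (⟪x, φ i⟫ - α i) - max 0 (⟪y, φ i⟫ - α i)) ^ 2 := by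
  have hmid : α i ≤ 2⁻¹ * ⟪x, φ i⟫ + 2⁻¹ * ⟪y, φ i⟫ := by
    simpa [activatedSet, midpoint_eq_smul_add, real_inner_smul_left, inner_add_left] using hi
  have hsum : 0 ≤ (⟪x, φ i⟫ - α i) + (⟪y, φ i⟫ - α i) := by linarith
  have hdiff : ⟪x - y, φ i⟫ = (⟪x, φ i⟫ - α i) - (⟪y, φ i⟫ - α i) := by
    rw [inner_sub_left]
    ring
  rw [hdiff]
  exact sq_sub_le_four_mul_sq_max_zero_sub hsum

theorem sum_activatedSet_midpoint_sq_inner_sub_le (φ : ι → E) (α : ι → ℝ) (x y : E) :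
    ∑ i ∈ activatedSet φ α (midpoint ℝ x y), ⟪x - y, φ i⟫ ^ 2 ≤
      4 * ∑ i, (max 0 (⟪x, φ i⟫ - α i) - max 0 (⟪y, φ i⟫ - α i)) ^ 2 := by
  rw [mul_sum]
  calc ∑ i ∈ activatedSet φ α (midpoint ℝ x y), ⟪x - y, φ i⟫ ^ 2
      ≤ ∑ i ∈ activatedSet φ α (midpoint ℝ x y),
          4 * (max 0 (⟪x, φ i⟫ - α i) - max 0 (⟪y, φ i⟫ - α i)) ^ 2 :=
        sum_le_sum fun _ hi => sq_inner_sub_le_of_mem_activatedSet_midpoint hi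
    _ ≤ ∑ i, 4 * (max 0 (⟪x, φ i⟫ - α i) - max 0 (⟪y, φ i⟫ - α i)) ^ 2 :=
        sum_le_sum_of_subset_of_nonneg (subset_univ _) fun _ _ _ => by positivity

end ActivatedSet

theorem relu_layer_lower_lipschitz_general
    {n : ℕ} {ι : Type*} [Fintype ι]
    (φ : ι → EuclideanSpace ℝ (Fin n)) (α : ι → ℝ)
    (C : EuclideanSpace ℝ (Fin n) → EuclideanSpace ℝ ι)
    (hC : ∀ x, C x = fun i : ι => max 0 (⟪x, φ i⟫ - α i))
    (A : ℝ)
    (hlow : ∀ x z : EuclideanSpace ℝ (Fin n),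
      A * ‖z‖ ^ 2 ≤ ∑ i ∈ univ.filter (fun i : ι => α i ≤ ⟪x, φ i⟫), ⟪z, φ i⟫ ^ 2) :
    ∀ x y : EuclideanSpace ℝ (Fin n),
      (1 / 2) * Real.sqrt A * ‖x - y‖ ≤ ‖C x - C y‖ := by
  intro x y
  have hnorm : ‖C x - C y‖ ^ 2 = ∑ i, (max 0 (⟪x, φ i⟫ - α i) - max 0 (⟪y, φ i⟫ - α i)) ^ 2 := by
    simp [EuclideanSpace.real_norm_sq_eq, hC]
  have key : A * ‖x - y‖ ^ 2 ≤ 4 * ‖C x - C y‖ ^ 2 := by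
    rw [hnorm]
    exact (hlow (midpoint ℝ x y) (x - y)).trans
      (sum_activatedSet_midpoint_sq_inner_sub_le φ α x y)
  calc (1 / 2) * Real.sqrt A * ‖x - y‖ = (1 / 2) * Real.sqrt (A * ‖x - y‖ ^ 2) := by
        rw [Real.sqrt_mul' _ (sq_nonneg _), Real.sqrt_sq (norm_nonneg _), mul_assoc]
    _ ≤ (1 / 2) * Real.sqrt ((2 * ‖C x - C y‖) ^ 2) := by
        gcongr
        exact key.trans_eq (by ring)
    _ = ‖C x - C y‖ := by
        rw [Real.sqrt_sq (by positivity)]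
        ring

/-- If `A` is a lower frame bound of every activated collection
of a ReLU layer `C_α`, then `(1/2)·√A` is a lower Lipschitz bound for `C_α`. -/
theorem relu_layer_lower_lipschitz
    {n : ℕ} {ι : Type*} [Fintype ι]
    (φ : ι → EuclideanSpace ℝ (Fin n)) (α : ι → ℝ)
    (C : EuclideanSpace ℝ (Fin n) → EuclideanSpace ℝ ι)
    (hC : ∀ x, C x = fun i : ι => max 0 (⟪x, φ i⟫ - α i))
    (A : ℝ) (hA : 0 ≤ A)
    (hlow : ∀ x z : EuclideanSpace ℝ (Fin n),
      A * ‖z‖ ^ 2 ≤ ∑ i ∈ univ.filter (fun i : ι => α i ≤ ⟪x, φ i⟫), ⟪z, φ i⟫ ^ 2) :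
    ∀ x y : EuclideanSpace ℝ (Fin n),
      (1 / 2) * Real.sqrt A * ‖x - y‖ ≤ ‖C x - C y‖ :=
  relu_layer_lower_lipschitz_general φ α C hC A hlow
end

section
/- Let (φ_i)_{i∈I} be a finite frame for ℝ^n. Then the ReLU layer with zero bias associated with the symmetrized family (φ_i)_{i∈I} ∪ (−φ_i)_{i∈I}, i.e., the map x ↦ (ReLU(⟨x,φ_i⟩))_{i∈I} ⊕ (ReLU(⟨x,−φ_i⟩))_{i∈I} from ℝ^n to ℝ^I × ℝ^I, is one-to-one on ℝ^n. -/
open RealInnerProductSpace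

theorem max_zero_sub_max_zero_neg {α : Type*} [LinearOrder α] [AddGroup α] [AddLeftMono α]
    (a : α) : max 0 a - max 0 (-a) = a := by
  rw [max_comm, max_comm 0]
  exact posPart_sub_negPart a

theorem ext_inner_left_of_span_eq_top {𝕜 E ι : Type*} [RCLike 𝕜] [NormedAddCommGroup E]
    [InnerProductSpace 𝕜 E] {φ : ι → E} (hφ : Submodule.span 𝕜 (Set.range φ) = ⊤) {x y : E}
    (h : ∀ i, inner 𝕜 x (φ i) = inner 𝕜 y (φ i)) : x = y := by
  have hxy : innerₛₗ 𝕜 x = innerₛₗ 𝕜 y := LinearMap.ext_on_range hφ h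
  exact ext_inner_right 𝕜 fun v => LinearMap.congr_fun hxy v

theorem relu_layer_symmetrized_injective_general
    {n : ℕ} {ι : Type*}
    (φ : ι → EuclideanSpace ℝ (Fin n))
    (hframe : Submodule.span ℝ (Set.range φ) = ⊤) :
    Function.Injective
      (fun x : EuclideanSpace ℝ (Fin n) =>
        ((fun i : ι => max 0 ⟪x, φ i⟫), (fun i : ι => max 0 ⟪x, -φ i⟫))) := by
  intro x y h
  obtain ⟨hpos, hneg⟩ := Prod.mk.inj h
  refine ext_inner_left_of_span_eq_top hframe fun i => ?_
  rw [← max_zero_sub_max_zero_neg ⟪x, φ i⟫, ← max_zero_sub_max_zero_neg ⟪y, φ i⟫,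
    ← inner_neg_right, ← inner_neg_right]
  exact congr_arg₂ (· - ·) (congr_fun hpos i) (congr_fun hneg i)

/-- For a finite frame `(φ_i)` for `ℝ^n`, the ReLU layer with zero bias
associated with the symmetrized family `(φ_i) ∪ (−φ_i)` is one-to-one on `ℝ^n`. -/
theorem relu_layer_symmetrized_injective
    {n : ℕ} {ι : Type*} [Fintype ι]
    (φ : ι → EuclideanSpace ℝ (Fin n))
    (hframe : Submodule.span ℝ (Set.range φ) = ⊤) :
    Function.Injective
      (fun x : EuclideanSpace ℝ (Fin n) =>
        ((fun i : ι => max 0 ⟪x, φ i⟫), (fun i : ι => max 0 ⟪x, -φ i⟫))) :=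
  relu_layer_symmetrized_injective_general φ hframe
end

section
/- Let (φ_i)_{i∈I} be a finite family of vectors in ℝ^n and let C denote the ReLU layer with zero bias associated with the symmetrized family (φ_i)_{i∈I} ∪ (−φ_i)_{i∈I}, i.e., C(x) = (ReLU(⟨x,φ_i⟩))_{i∈I} ⊕ (ReLU(−⟨x,φ_i⟩))_{i∈I}. If A ≥ 0 satisfies A‖z‖² ≤ Σ_{i∈I}|⟨z,φ_i⟩|² for all z ∈ ℝ^n, then for all x, y ∈ ℝ^n one has (1/2)·A·‖x−y‖² ≤ ‖C(x) − C(y)‖². -/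
open RealInnerProductSpace

-- Splitting `t = max 0 t - max 0 (-t)` writes `a - b` as a difference `u - v` of the two ReLU
-- increments, and `(u - v)² ≤ 2 (u² + v²)`.
lemma sq_sub_le_two_mul_sq_relu_sub_add {α : Type*} [CommRing α] [LinearOrder α]
    [IsStrictOrderedRing α] (a b : α) :
    (a - b) ^ 2 ≤ 2 * ((max 0 a - max 0 b) ^ 2 + (max 0 (-a) - max 0 (-b)) ^ 2) := by
  have hsplit (t : α) : max 0 t - max 0 (-t) = t := by
    rw [max_comm, max_comm 0]
    exact max_zero_sub_max_neg_zero_eq_self t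
  calc (a - b) ^ 2 = ((max 0 a - max 0 b) + -(max 0 (-a) - max 0 (-b))) ^ 2 := by
        congr 1
        linear_combination hsplit b - hsplit a
    _ ≤ 2 * ((max 0 a - max 0 b) ^ 2 + (-(max 0 (-a) - max 0 (-b))) ^ 2) := add_sq_le
    _ = _ := by rw [neg_sq]

lemma EuclideanSpace.real_norm_sq_eq_sum_inl_add_inr {ι : Type*} [Fintype ι]
    (f : EuclideanSpace ℝ (ι ⊕ ι)) :
    ‖f‖ ^ 2 = ∑ i, (f (.inl i) ^ 2 + f (.inr i) ^ 2) := by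
  rw [EuclideanSpace.real_norm_sq_eq, Fintype.sum_sum_type, Finset.sum_add_distrib]

theorem symmetrized_relu_lower_bound_general
    {n : ℕ} {ι : Type*} [Fintype ι]
    (φ : ι → EuclideanSpace ℝ (Fin n))
    (C : EuclideanSpace ℝ (Fin n) → EuclideanSpace ℝ (ι ⊕ ι))
    (hC : ∀ x, C x = Sum.elim (fun i : ι => max 0 ⟪x, φ i⟫) (fun i : ι => max 0 (-⟪x, φ i⟫)))
    (A : ℝ)
    (hlow : ∀ z : EuclideanSpace ℝ (Fin n), A * ‖z‖ ^ 2 ≤ ∑ i : ι, ⟪z, φ i⟫ ^ 2) :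
    ∀ x y : EuclideanSpace ℝ (Fin n),
      (1 / 2) * A * ‖x - y‖ ^ 2 ≤ ‖C x - C y‖ ^ 2 := by
  intro x y
  have hpair : ∀ i,
      ⟪x - y, φ i⟫ ^ 2 ≤ 2 * ((C x - C y) (.inl i) ^ 2 + (C x - C y) (.inr i) ^ 2) := by
    intro i
    simpa only [inner_sub_left, PiLp.sub_apply, hC, Sum.elim_inl, Sum.elim_inr]
      using sq_sub_le_two_mul_sq_relu_sub_add ⟪x, φ i⟫ ⟪y, φ i⟫
  calc (1 / 2) * A * ‖x - y‖ ^ 2 ≤ (1 / 2) * ∑ i, ⟪x - y, φ i⟫ ^ 2 := by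
        linarith [hlow (x - y)]
    _ ≤ ‖C x - C y‖ ^ 2 := by
        rw [EuclideanSpace.real_norm_sq_eq_sum_inl_add_inr, Finset.mul_sum]
        gcongr with i
        linarith [hpair i]

/-- If `A` is a lower frame bound of `(φ_i)`, then the ReLU layer `C`
with zero bias of the symmetrized family `(φ_i) ∪ (−φ_i)` satisfies
`(1/2)·A·‖x−y‖² ≤ ‖C(x) − C(y)‖²`. -/
theorem symmetrized_relu_lower_bound
    {n : ℕ} {ι : Type*} [Fintype ι]
    (φ : ι → EuclideanSpace ℝ (Fin n))
    (C : EuclideanSpace ℝ (Fin n) → EuclideanSpace ℝ (ι ⊕ ι))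
    (hC : ∀ x, C x = Sum.elim (fun i : ι => max 0 ⟪x, φ i⟫) (fun i : ι => max 0 (-⟪x, φ i⟫)))
    (A : ℝ) (hA : 0 ≤ A)
    (hlow : ∀ z : EuclideanSpace ℝ (Fin n), A * ‖z‖ ^ 2 ≤ ∑ i : ι, ⟪z, φ i⟫ ^ 2) :
    ∀ x y : EuclideanSpace ℝ (Fin n),
      (1 / 2) * A * ‖x - y‖ ^ 2 ≤ ‖C x - C y‖ ^ 2 :=
  symmetrized_relu_lower_bound_general φ C hC A hlow
end

section
/- Let (φ_i)_{i∈I} be a finite family of vectors in ℝ^n and let C denote the ReLU layer with zero bias associated with the symmetrized family (φ_i)_{i∈I} ∪ (−φ_i)_{i∈I}, i.e., C(x) = (ReLU(⟨x,φ_i⟩))_{i∈I} ⊕ (ReLU(−⟨x,φ_i⟩))_{i∈I}. If u ∈ ℝ^n is a unit vector and A ≥ 0 satisfies Σ_{i∈I}|⟨u,φ_i⟩|² = A, then ‖C(u) − C(−u)‖² = 2A = (1/2)·A·‖u − (−u)‖². Consequently, if A is the optimal lower frame bound of (φ_i)_{i∈I} (attained at some unit vector u), the optimal lower Lipschitz bound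 of C equals (1/√2)·√A. -/
open RealInnerProductSpace

/-!
Write `a⁺ = max 0 a` and `a⁻ = max 0 (-a)`, so that `a = a⁺ - a⁻`. For `x, y` the differences
`p = ⟪x, φ i⟫⁺ - ⟪y, φ i⟫⁺` and `q = ⟪x, φ i⟫⁻ - ⟪y, φ i⟫⁻` satisfy `p - q = ⟪x - y, φ i⟫`, hence
`⟪x - y, φ i⟫² ≤ 2 (p² + q²)`; summing over `i` and using the lower frame bound gives
`(A / 2) ‖x - y‖² ≤ ‖C x - C y‖²`. For `y = -x` we get `q = -p`, the equality case, so
`‖C u - C (-u)‖² = 2A = (A / 2) ‖u - (-u)‖²` at the unit vector `u` where the frame bound is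
attained.
-/

lemma max_zero_sub_max_zero_neg_s10 (a : ℝ) : max 0 a - max 0 (-a) = a := by
  rcases le_total 0 a with h | h
  · rw [max_eq_right h, max_eq_left (neg_nonpos.mpr h), sub_zero]
  · rw [max_eq_left h, max_eq_right (neg_nonneg.mpr h), zero_sub, neg_neg]

lemma sq_sub_le_two_mul_relu_sub_sq (a b : ℝ) :
    (a - b) ^ 2 ≤ 2 * ((max 0 a - max 0 b) ^ 2 + (max 0 (-a) - max 0 (-b)) ^ 2) := by
  have hpq : (max 0 a - max 0 b) - (max 0 (-a) - max 0 (-b)) = a - b := by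
    linarith [max_zero_sub_max_zero_neg_s10 a, max_zero_sub_max_zero_neg_s10 b]
  rw [← hpq]
  nlinarith [sq_nonneg ((max 0 a - max 0 b) + (max 0 (-a) - max 0 (-b)))]

lemma IsGreatest.of_attained {X Y : Type*} [NormedAddCommGroup X] [NormedAddCommGroup Y]
    {f : X → Y} {κ₀ : ℝ} (hκ₀ : ∀ x y, κ₀ * ‖x - y‖ ≤ ‖f x - f y‖) {u v : X} (huv : u ≠ v)
    (hattained : ‖f u - f v‖ = κ₀ * ‖u - v‖) :
    IsGreatest {κ : ℝ | ∀ x y, κ * ‖x - y‖ ≤ ‖f x - f y‖} κ₀ :=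
  ⟨hκ₀, fun _ hκ =>
    le_of_mul_le_mul_right (hattained ▸ hκ u v) (norm_pos_iff.mpr (sub_ne_zero.mpr huv))⟩

section SymmetrizedReLU

variable {E ι : Type*} [NormedAddCommGroup E] [InnerProductSpace ℝ E] [Fintype ι]

noncomputable def symmetrizedReLU (φ : ι → E) (x : E) : EuclideanSpace ℝ (ι ⊕ ι) :=
  WithLp.toLp 2 (Sum.elim (fun i => max 0 ⟪x, φ i⟫) (fun i => max 0 (-⟪x, φ i⟫)))

lemma norm_symmetrizedReLU_sub_sq (φ : ι → E) (x y : E) :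
    ‖symmetrizedReLU φ x - symmetrizedReLU φ y‖ ^ 2 =
      ∑ i, ((max 0 ⟪x, φ i⟫ - max 0 ⟪y, φ i⟫) ^ 2 +
        (max 0 (-⟪x, φ i⟫) - max 0 (-⟪y, φ i⟫)) ^ 2) := by
  simp [EuclideanSpace.norm_sq_eq, Fintype.sum_sum_type, symmetrizedReLU, Finset.sum_add_distrib]

lemma sum_inner_sub_sq_le_two_mul_norm_symmetrizedReLU_sub_sq (φ : ι → E) (x y : E) :
    ∑ i, ⟪x - y, φ i⟫ ^ 2 ≤ 2 * ‖symmetrizedReLU φ x - symmetrizedReLU φ y‖ ^ 2 := by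
  rw [norm_symmetrizedReLU_sub_sq, Finset.mul_sum]
  refine Finset.sum_le_sum fun i _ => ?_
  rw [inner_sub_left]
  exact sq_sub_le_two_mul_relu_sub_sq _ _

lemma norm_symmetrizedReLU_sub_neg_sq (φ : ι → E) (u : E) :
    ‖symmetrizedReLU φ u - symmetrizedReLU φ (-u)‖ ^ 2 = 2 * ∑ i, ⟪u, φ i⟫ ^ 2 := by
  have hswap (a : ℝ) : max 0 (-a) - max 0 a = -a := by linarith [max_zero_sub_max_zero_neg_s10 a]
  simp only [norm_symmetrizedReLU_sub_sq, inner_neg_left, neg_neg, max_zero_sub_max_zero_neg_s10,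
    hswap, neg_sq, Finset.mul_sum]
  exact Finset.sum_congr rfl fun i _ => by ring

lemma sqrt_half_mul_norm_sub_le_norm_symmetrizedReLU_sub {φ : ι → E} {A : ℝ}
    (hframe : ∀ z, A * ‖z‖ ^ 2 ≤ ∑ i, ⟪z, φ i⟫ ^ 2) (x y : E) :
    √(A / 2) * ‖x - y‖ ≤ ‖symmetrizedReLU φ x - symmetrizedReLU φ y‖ := by
  have hsq : A / 2 * ‖x - y‖ ^ 2 ≤ ‖symmetrizedReLU φ x - symmetrizedReLU φ y‖ ^ 2 := by
    linarith [hframe (x - y), sum_inner_sub_sq_le_two_mul_norm_symmetrizedReLU_sub_sq φ x y]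
  calc √(A / 2) * ‖x - y‖ = √(A / 2 * ‖x - y‖ ^ 2) := by
        rw [Real.sqrt_mul' _ (by positivity), Real.sqrt_sq (norm_nonneg _)]
    _ ≤ √(‖symmetrizedReLU φ x - symmetrizedReLU φ y‖ ^ 2) := Real.sqrt_le_sqrt hsq
    _ = ‖symmetrizedReLU φ x - symmetrizedReLU φ y‖ := Real.sqrt_sq (norm_nonneg _)

end SymmetrizedReLU

theorem symmetrized_relu_optimal_lower_lipschitz_general
    {n : ℕ} {ι : Type*} [Fintype ι]
    (φ : ι → EuclideanSpace ℝ (Fin n))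
    (C : EuclideanSpace ℝ (Fin n) → EuclideanSpace ℝ (ι ⊕ ι))
    (hC : ∀ x, C x = Sum.elim (fun i : ι => max 0 ⟪x, φ i⟫) (fun i : ι => max 0 (-⟪x, φ i⟫)))
    (A : ℝ)
    (u : EuclideanSpace ℝ (Fin n)) (hu : ‖u‖ = 1)
    (huA : ∑ i : ι, ⟪u, φ i⟫ ^ 2 = A) :
    (‖C u - C (-u)‖ ^ 2 = 2 * A ∧ 2 * A = (1 / 2) * A * ‖u - (-u)‖ ^ 2) ∧
      ((∀ z : EuclideanSpace ℝ (Fin n), A * ‖z‖ ^ 2 ≤ ∑ i : ι, ⟪z, φ i⟫ ^ 2) →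
        IsGreatest
          {κ : ℝ | ∀ x y : EuclideanSpace ℝ (Fin n), κ * ‖x - y‖ ≤ ‖C x - C y‖}
          ((1 / Real.sqrt 2) * Real.sqrt A)) := by
  obtain rfl : C = symmetrizedReLU φ :=
    funext fun x => by rw [symmetrizedReLU, ← hC x, WithLp.toLp_ofLp]
  have hA : 0 ≤ A := huA ▸ Finset.sum_nonneg fun i _ => sq_nonneg _
  have hdiam : ‖u - -u‖ = 2 := by rw [sub_neg_eq_add, ← two_smul ℝ, norm_smul, hu]; norm_num
  have hgap : ‖symmetrizedReLU φ u - symmetrizedReLU φ (-u)‖ ^ 2 = 2 * A :=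
    huA ▸ norm_symmetrizedReLU_sub_neg_sq φ u
  refine ⟨⟨hgap, by rw [hdiam]; ring⟩, fun hframe => ?_⟩
  rw [one_div_mul_eq_div, ← Real.sqrt_div' _ zero_le_two]
  refine IsGreatest.of_attained (sqrt_half_mul_norm_sub_le_norm_symmetrizedReLU_sub hframe)
    (u := u) (v := -u) (fun h => by rw [← h, sub_self, norm_zero] at hdiam; norm_num at hdiam) ?_
  rw [← Real.sqrt_sq (norm_nonneg _), hgap, hdiam, ← Real.sqrt_sq zero_le_two,
    ← Real.sqrt_mul (by positivity)]
  congr 1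
  ring

/-- For the zero-bias ReLU layer `C` of the symmetrized family
`(φ_i) ∪ (−φ_i)`: if `u` is a unit vector with `Σ_i ⟨u,φ_i⟩² = A`, then
`‖C(u) − C(−u)‖² = 2A = (1/2)·A·‖u − (−u)‖²`. Consequently, if `A` is moreover a
lower frame bound of `(φ_i)` (so it is the optimal one, attained at `u`), then the
optimal lower Lipschitz bound of `C` equals `(1/√2)·√A`. -/
theorem symmetrized_relu_optimal_lower_lipschitz
    {n : ℕ} {ι : Type*} [Fintype ι]
    (φ : ι → EuclideanSpace ℝ (Fin n))
    (C : EuclideanSpace ℝ (Fin n) → EuclideanSpace ℝ (ι ⊕ ι))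
    (hC : ∀ x, C x = Sum.elim (fun i : ι => max 0 ⟪x, φ i⟫) (fun i : ι => max 0 (-⟪x, φ i⟫)))
    (A : ℝ) (hA : 0 ≤ A)
    (u : EuclideanSpace ℝ (Fin n)) (hu : ‖u‖ = 1)
    (huA : ∑ i : ι, ⟪u, φ i⟫ ^ 2 = A) :
    (‖C u - C (-u)‖ ^ 2 = 2 * A ∧ 2 * A = (1 / 2) * A * ‖u - (-u)‖ ^ 2) ∧
      ((∀ z : EuclideanSpace ℝ (Fin n), A * ‖z‖ ^ 2 ≤ ∑ i : ι, ⟪z, φ i⟫ ^ 2) →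
        IsGreatest
          {κ : ℝ | ∀ x y : EuclideanSpace ℝ (Fin n), κ * ‖x - y‖ ≤ ‖C x - C y‖}
          ((1 / Real.sqrt 2) * Real.sqrt A)) :=
  symmetrized_relu_optimal_lower_lipschitz_general φ C hC A u hu huA
end

section
/- Let (φ_i)_{i∈I} be a finite family of vectors in ℝ^n, let λ > 0, and let x, y lie in the closed unit ball B of ℝ^n. Let I_λ^Δ(x,y) = {i ∈ I : ⟨x,φ_i⟩ > λ and ⟨y,φ_i⟩ < −λ} ∪ {i ∈ I : ⟨x,φ_i⟩ < −λ and ⟨y,φ_i⟩ > λ}. If A ≥ 0 satisfies A‖z‖² ≤ Σ_{i ∈ I_λ((x+y)/2) ∖ I_λ^Δ(x,y)} |⟨z,φ_i⟩|² for all z ∈ ℝ^n, then ((1/4)·A + |I_λ^Δ(x,y)|·λ²)·‖x−y‖² ≤ ‖S_λ(x) − S_λ(y)‖². -/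
/-!
Write `a i = ⟪x, φ i⟫`, `b i = ⟪y, φ i⟫` and let `clip lam` be the clipping to `[-lam, lam]`,
which is the saturation `σ_lam`. On an index where `a i` and `b i` saturate with opposite
signs, `|clip lam (a i) - clip lam (b i)| = 2 lam`; since `‖x - y‖ ≤ 2` on the unit ball, this
contributes at least `lam² ‖x - y‖²`. On an index where the midpoint is unsaturated and the
signs are not opposite, at most one of `a i`, `b i` is saturated, and then clipping shrinks
`|a i - b i|` by at most half; the lower frame bound of these indices gives the term
`A ‖x - y‖² / 4`.
-/

open RealInnerProductSpace Finset

def clip (lam t : ℝ) : ℝ := max (-lam) (min t lam)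

theorem sign_mul_min_abs_eq_clip {lam : ℝ} (hlam : 0 ≤ lam) (t : ℝ) :
    Real.sign t * min |t| lam = clip lam t := by
  unfold clip
  rcases lt_trichotomy t 0 with ht | rfl | ht
  · rw [Real.sign_of_neg ht, abs_of_neg ht]
    simp only [max_def, min_def]
    split_ifs <;> linarith
  · simp [hlam]
  · rw [Real.sign_of_pos ht, abs_of_pos ht]
    simp only [max_def, min_def]
    split_ifs <;> linarith

theorem abs_clip_sub_clip_of_opposite {lam a b : ℝ} (hlam : 0 ≤ lam)
    (hopp : (lam < a ∧ b < -lam) ∨ (a < -lam ∧ lam < b)) :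
    |clip lam a - clip lam b| = 2 * lam := by
  unfold clip
  rcases hopp with ⟨ha, hb⟩ | ⟨ha, hb⟩
  · rw [min_eq_right ha.le, max_eq_right (by linarith), min_eq_left (by linarith),
      max_eq_left hb.le, abs_of_nonneg (by linarith)]
    ring
  · rw [min_eq_left (by linarith), max_eq_left ha.le, min_eq_right hb.le,
      max_eq_right (by linarith), abs_of_nonpos (by linarith)]
    ring

theorem abs_sub_div_two_le_abs_clip_sub_clip {lam a b : ℝ} (hmid : |(a + b) / 2| ≤ lam)
    (hopp : ¬((lam < a ∧ b < -lam) ∨ (a < -lam ∧ lam < b))) :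
    |a - b| / 2 ≤ |clip lam a - clip lam b| := by
  obtain ⟨hmid_ge, hmid_le⟩ := abs_le.mp hmid
  simp only [not_or, not_and_or, not_lt] at hopp
  unfold clip
  -- Both saturated on the same side contradicts `hmid`; if only `a > lam`, then
  -- `a + b ≤ 2 lam` gives `a - b ≤ 2 (lam - b)`, and symmetrically.
  obtain ⟨ha | hb, ha' | hb'⟩ := hopp <;>
    rcases abs_cases (a - b) with ⟨hab, hab_sign⟩ | ⟨hab, hab_sign⟩ <;>
    rw [hab, le_abs] <;> simp only [max_def, min_def] <;> split_ifs <;>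
    first | (left; linarith) | (right; linarith)

theorem sum_sq_sub_div_four_add_card_mul_le_sum_sq_clip_sub {ι : Type*} [Fintype ι]
    [DecidableEq ι] {lam : ℝ} (hlam : 0 ≤ lam) (a b : ι → ℝ) {J Δ : Finset ι}
    (hJΔ : Disjoint J Δ)
    (hJ : ∀ i ∈ J, |(a i + b i) / 2| ≤ lam ∧
      ¬((lam < a i ∧ b i < -lam) ∨ (a i < -lam ∧ lam < b i)))
    (hΔ : ∀ i ∈ Δ, (lam < a i ∧ b i < -lam) ∨ (a i < -lam ∧ lam < b i)) :
    (∑ i ∈ J, (a i - b i) ^ 2) / 4 + #Δ * (2 * lam) ^ 2 ≤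
      ∑ i, (clip lam (a i) - clip lam (b i)) ^ 2 := by
  have hJ_le : (∑ i ∈ J, (a i - b i) ^ 2) / 4 ≤
      ∑ i ∈ J, (clip lam (a i) - clip lam (b i)) ^ 2 := by
    rw [sum_div]
    refine sum_le_sum fun i hi => ?_
    calc (a i - b i) ^ 2 / 4 = (|a i - b i| / 2) ^ 2 := by rw [div_pow, sq_abs]; norm_num
      _ ≤ |clip lam (a i) - clip lam (b i)| ^ 2 := by
        gcongr
        exact abs_sub_div_two_le_abs_clip_sub_clip (hJ i hi).1 (hJ i hi).2
      _ = (clip lam (a i) - clip lam (b i)) ^ 2 := sq_abs _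
  have hΔ_eq : ∑ i ∈ Δ, (clip lam (a i) - clip lam (b i)) ^ 2 = #Δ * (2 * lam) ^ 2 := by
    rw [sum_congr rfl fun i hi => by rw [← sq_abs, abs_clip_sub_clip_of_opposite hlam (hΔ i hi)],
      sum_const, nsmul_eq_mul]
  calc (∑ i ∈ J, (a i - b i) ^ 2) / 4 + #Δ * (2 * lam) ^ 2
      ≤ ∑ i ∈ J ∪ Δ, (clip lam (a i) - clip lam (b i)) ^ 2 := by
        rw [sum_union hJΔ, hΔ_eq]
        exact add_le_add_left hJ_le _
    _ ≤ ∑ i, (clip lam (a i) - clip lam (b i)) ^ 2 :=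
        sum_le_sum_of_subset_of_nonneg (subset_univ _) fun i _ _ => sq_nonneg _

theorem saturation_midpoint_lower_bound_general
    {n : ℕ} {ι : Type*} [Fintype ι] [DecidableEq ι]
    (φ : ι → EuclideanSpace ℝ (Fin n)) (lam : ℝ) (hlam : 0 < lam)
    (S : EuclideanSpace ℝ (Fin n) → EuclideanSpace ℝ ι)
    (hS : ∀ x, S x = fun i : ι => Real.sign ⟪x, φ i⟫ * min |⟪x, φ i⟫| lam)
    (x y : EuclideanSpace ℝ (Fin n))
    (hx : x ∈ Metric.closedBall (0 : EuclideanSpace ℝ (Fin n)) 1)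
    (hy : y ∈ Metric.closedBall (0 : EuclideanSpace ℝ (Fin n)) 1)
    (Δ : Finset ι)
    (hΔ : Δ = univ.filter (fun i : ι =>
      (lam < ⟪x, φ i⟫ ∧ ⟪y, φ i⟫ < -lam) ∨ (⟪x, φ i⟫ < -lam ∧ lam < ⟪y, φ i⟫)))
    (A : ℝ)
    (hlow : ∀ z : EuclideanSpace ℝ (Fin n),
      A * ‖z‖ ^ 2 ≤
        ∑ i ∈ (univ.filter (fun i : ι => |⟪(2 : ℝ)⁻¹ • (x + y), φ i⟫| ≤ lam)) \ Δ,
          ⟪z, φ i⟫ ^ 2) :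
    ((1 / 4) * A + (Δ.card : ℝ) * lam ^ 2) * ‖x - y‖ ^ 2 ≤ ‖S x - S y‖ ^ 2 := by
  set J := (univ.filter fun i : ι => |⟪(2 : ℝ)⁻¹ • (x + y), φ i⟫| ≤ lam) \ Δ
  have hSxy : ‖S x - S y‖ ^ 2 = ∑ i, (clip lam ⟪x, φ i⟫ - clip lam ⟪y, φ i⟫) ^ 2 := by
    simp [EuclideanSpace.real_norm_sq_eq, hS, sign_mul_min_abs_eq_clip hlam.le]
  have hJ : ∀ i ∈ J, |(⟪x, φ i⟫ + ⟪y, φ i⟫) / 2| ≤ lam ∧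
      ¬((lam < ⟪x, φ i⟫ ∧ ⟪y, φ i⟫ < -lam) ∨ (⟪x, φ i⟫ < -lam ∧ lam < ⟪y, φ i⟫)) := by
    intro i hi
    simp only [J, hΔ, mem_sdiff, mem_filter, mem_univ, true_and, real_inner_smul_left,
      inner_add_left] at hi
    obtain ⟨hmid, hopp⟩ := hi
    exact ⟨by rwa [div_eq_inv_mul], hopp⟩
  have hclip := sum_sq_sub_div_four_add_card_mul_le_sum_sq_clip_sub hlam.le
    (fun i => ⟪x, φ i⟫) (fun i => ⟪y, φ i⟫) (J := J) sdiff_disjoint hJ (by simp [hΔ])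
  have hframe : A * ‖x - y‖ ^ 2 ≤ ∑ i ∈ J, (⟪x, φ i⟫ - ⟪y, φ i⟫) ^ 2 := by
    simpa [inner_sub_left] using hlow (x - y)
  have hxy : ‖x - y‖ ^ 2 ≤ 4 := by
    have hxy_le_two : ‖x - y‖ ≤ 1 + 1 := (norm_sub_le x y).trans
      (add_le_add (mem_closedBall_zero_iff.mp hx) (mem_closedBall_zero_iff.mp hy))
    nlinarith [norm_nonneg (x - y)]
  have hΔxy : (Δ.card : ℝ) * lam ^ 2 * ‖x - y‖ ^ 2 ≤ Δ.card * (2 * lam) ^ 2 := by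
    nlinarith [mul_nonneg (Nat.cast_nonneg (α := ℝ) Δ.card) (sq_nonneg lam)]
  rw [hSxy]
  linarith

/-- Midpoint lower bound for the saturated measurement operator:
if `A` is a lower frame bound of the collection indexed by
`I_λ((x+y)/2) ∖ I_λ^Δ(x,y)`, then
`((1/4)·A + |I_λ^Δ(x,y)|·λ²)·‖x−y‖² ≤ ‖S_λ(x) − S_λ(y)‖²`. -/
theorem saturation_midpoint_lower_bound
    {n : ℕ} {ι : Type*} [Fintype ι] [DecidableEq ι]
    (φ : ι → EuclideanSpace ℝ (Fin n)) (lam : ℝ) (hlam : 0 < lam)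
    (S : EuclideanSpace ℝ (Fin n) → EuclideanSpace ℝ ι)
    (hS : ∀ x, S x = fun i : ι => Real.sign ⟪x, φ i⟫ * min |⟪x, φ i⟫| lam)
    (x y : EuclideanSpace ℝ (Fin n))
    (hx : x ∈ Metric.closedBall (0 : EuclideanSpace ℝ (Fin n)) 1)
    (hy : y ∈ Metric.closedBall (0 : EuclideanSpace ℝ (Fin n)) 1)
    (Δ : Finset ι)
    (hΔ : Δ = univ.filter (fun i : ι =>
      (lam < ⟪x, φ i⟫ ∧ ⟪y, φ i⟫ < -lam) ∨ (⟪x, φ i⟫ < -lam ∧ lam < ⟪y, φ i⟫)))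
    (A : ℝ) (hA : 0 ≤ A)
    (hlow : ∀ z : EuclideanSpace ℝ (Fin n),
      A * ‖z‖ ^ 2 ≤
        ∑ i ∈ (univ.filter (fun i : ι => |⟪(2 : ℝ)⁻¹ • (x + y), φ i⟫| ≤ lam)) \ Δ,
          ⟪z, φ i⟫ ^ 2) :
    ((1 / 4) * A + (Δ.card : ℝ) * lam ^ 2) * ‖x - y‖ ^ 2 ≤ ‖S x - S y‖ ^ 2 :=
  saturation_midpoint_lower_bound_general φ lam hlam S hS x y hx hy Δ hΔ A hlow
end

section
/- Let (φ_i)_{i∈I} be a finite frame for ℝ^n and let M(x) = (|⟨x,φ_i⟩|)_{i∈I} be the intensity measurement operator, regarded as a map on ℝ^n/{±1} equipped with the distance d(x,y) = min(‖x−y‖, ‖x+y‖). Then: (a) if A ≥ 0 is such that for every x, y ∈ ℝ^n, A is a lower frame bound of (φ_i)_{i∈I⁺(x,y)} or A is a lower frame bound of (φ_i)_{i∈I⁻(x,y)}, then A·min(‖x−y‖, ‖x+y‖)² ≤ ‖M(x) − M(y)‖² for all x, y ∈ ℝ^n; (b) if κ ≥ 0 satisfies κ·min(‖x−y‖, ‖x+y‖)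 ≤ ‖M(x) − M(y)‖ for all x, y ∈ ℝ^n, then for every subset J ⊆ I, either κ²/2 is a lower frame bound of (φ_i)_{i∈J} or κ²/2 is a lower frame bound of (φ_i)_{i∈I∖J}. In the notation of the paper: √(A_{|·|}) ≤ κ_L ≤ √2·σ. -/
/-!
Splitting the sum `‖M x - M y‖² = ∑ (|⟪x, φ i⟫| - |⟪y, φ i⟫|)²` according to the signs of
`⟪x, φ i⟫ ⟪y, φ i⟫`: on `I⁺(x,y)` the summand is `⟪x - y, φ i⟫²`, on `I⁻(x,y)` it is
`⟪x + y, φ i⟫²`, and everywhere it is bounded by both. This gives (a) at once. For (b), if `J`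
and `Jᶜ` both fail the bound `κ²/2`, witnessed by unit vectors `u` and `v`, then `x = u + v`,
`y = u - v` satisfy `x + y = 2u`, `x - y = 2v`, so `min (‖x - y‖) (‖x + y‖) = 2` while
`‖M x - M y‖² ≤ 4 (∑_J ⟪u, φ i⟫² + ∑_Jᶜ ⟪v, φ i⟫²) < 4κ²`.
-/

open RealInnerProductSpace Finset

section OrderedRing

variable {R : Type*} [CommRing R] [LinearOrder R] [IsStrictOrderedRing R]

lemma sq_abs_sub_abs_le_sq_sub (a b : R) : (|a| - |b|) ^ 2 ≤ (a - b) ^ 2 :=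
  sq_le_sq.mpr (abs_abs_sub_abs_le_abs_sub a b)

lemma sq_abs_sub_abs_le_sq_add (a b : R) : (|a| - |b|) ^ 2 ≤ (a + b) ^ 2 := by
  simpa [abs_neg] using sq_abs_sub_abs_le_sq_sub a (-b)

lemma sq_abs_sub_abs_of_mul_nonneg {a b : R} (h : 0 ≤ a * b) :
    (|a| - |b|) ^ 2 = (a - b) ^ 2 := by
  rw [sub_sq, sub_sq, sq_abs, sq_abs, mul_assoc, mul_assoc, ← abs_mul, abs_of_nonneg h]

end OrderedRing

section Frame

variable {E ι : Type*} [NormedAddCommGroup E] [InnerProductSpace ℝ E]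

def IsLowerFrameBound (φ : ι → E) (s : Finset ι) (A : ℝ) : Prop :=
  ∀ z : E, A * ‖z‖ ^ 2 ≤ ∑ i ∈ s, ⟪z, φ i⟫ ^ 2

lemma isLowerFrameBound_of_norm_eq_one {φ : ι → E} {s : Finset ι} {A : ℝ}
    (h : ∀ z : E, ‖z‖ = 1 → A ≤ ∑ i ∈ s, ⟪z, φ i⟫ ^ 2) : IsLowerFrameBound φ s A := by
  intro z
  rcases eq_or_ne z 0 with rfl | hz
  · simp
  have hunit := h (‖z‖⁻¹ • z) (norm_smul_inv_norm hz)
  simp only [real_inner_smul_left, mul_pow, ← mul_sum] at hunit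
  calc A * ‖z‖ ^ 2 ≤ (‖z‖⁻¹ ^ 2 * ∑ i ∈ s, ⟪z, φ i⟫ ^ 2) * ‖z‖ ^ 2 := by gcongr
    _ = ∑ i ∈ s, ⟪z, φ i⟫ ^ 2 := by field_simp

def intensityMeasurement (φ : ι → E) (x : E) : EuclideanSpace ℝ ι :=
  WithLp.toLp 2 fun i => |⟪x, φ i⟫|

variable (φ : ι → E)

@[simp]
lemma intensityMeasurement_neg (x : E) :
    intensityMeasurement φ (-x) = intensityMeasurement φ x := by
  simp [intensityMeasurement]

variable [Fintype ι]

lemma norm_intensityMeasurement_sub_sq (x y : E) :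
    ‖intensityMeasurement φ x - intensityMeasurement φ y‖ ^ 2 =
      ∑ i, (|⟪x, φ i⟫| - |⟪y, φ i⟫|) ^ 2 := by
  simp [EuclideanSpace.norm_sq_eq, intensityMeasurement]

lemma sum_sq_inner_sub_le_norm_intensityMeasurement_sub_sq {x y : E} {s : Finset ι}
    (hs : ∀ i ∈ s, 0 ≤ ⟪x, φ i⟫ * ⟪y, φ i⟫) :
    ∑ i ∈ s, ⟪x - y, φ i⟫ ^ 2 ≤ ‖intensityMeasurement φ x - intensityMeasurement φ y‖ ^ 2 := by
  rw [norm_intensityMeasurement_sub_sq]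
  calc ∑ i ∈ s, ⟪x - y, φ i⟫ ^ 2 = ∑ i ∈ s, (|⟪x, φ i⟫| - |⟪y, φ i⟫|) ^ 2 :=
        sum_congr rfl fun i hi => by rw [inner_sub_left, sq_abs_sub_abs_of_mul_nonneg (hs i hi)]
    _ ≤ ∑ i, (|⟪x, φ i⟫| - |⟪y, φ i⟫|) ^ 2 :=
        sum_le_sum_of_subset_of_nonneg (subset_univ s) fun i _ _ => sq_nonneg _

lemma sum_sq_inner_add_le_norm_intensityMeasurement_sub_sq {x y : E} {s : Finset ι}
    (hs : ∀ i ∈ s, ⟪x, φ i⟫ * ⟪y, φ i⟫ ≤ 0) :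
    ∑ i ∈ s, ⟪x + y, φ i⟫ ^ 2 ≤ ‖intensityMeasurement φ x - intensityMeasurement φ y‖ ^ 2 := by
  simpa using sum_sq_inner_sub_le_norm_intensityMeasurement_sub_sq φ (x := x) (y := -y)
    fun i hi => by simpa [inner_neg_left] using hs i hi

lemma mul_min_sq_le_norm_intensityMeasurement_sub_sq {A : ℝ} (hA : 0 ≤ A) (x y : E)
    (h : IsLowerFrameBound φ {i | 0 ≤ ⟪x, φ i⟫ * ⟪y, φ i⟫} A ∨
      IsLowerFrameBound φ {i | ⟪x, φ i⟫ * ⟪y, φ i⟫ ≤ 0} A) :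
    A * min ‖x - y‖ ‖x + y‖ ^ 2 ≤
      ‖intensityMeasurement φ x - intensityMeasurement φ y‖ ^ 2 := by
  rcases h with h | h
  · calc A * min ‖x - y‖ ‖x + y‖ ^ 2 ≤ A * ‖x - y‖ ^ 2 := by gcongr; exact min_le_left _ _
      _ ≤ _ := h (x - y)
      _ ≤ _ := sum_sq_inner_sub_le_norm_intensityMeasurement_sub_sq φ fun i hi =>
        (mem_filter.mp hi).2
  · calc A * min ‖x - y‖ ‖x + y‖ ^ 2 ≤ A * ‖x + y‖ ^ 2 := by gcongr; exact min_le_right _ _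
      _ ≤ _ := h (x + y)
      _ ≤ _ := sum_sq_inner_add_le_norm_intensityMeasurement_sub_sq φ fun i hi =>
        (mem_filter.mp hi).2

variable [DecidableEq ι]

lemma norm_intensityMeasurement_sub_sq_le (J : Finset ι) (x y : E) :
    ‖intensityMeasurement φ x - intensityMeasurement φ y‖ ^ 2 ≤
      ∑ i ∈ J, ⟪x + y, φ i⟫ ^ 2 + ∑ i ∈ Jᶜ, ⟪x - y, φ i⟫ ^ 2 := by
  rw [norm_intensityMeasurement_sub_sq, ← sum_add_sum_compl J]
  refine add_le_add (sum_le_sum fun i _ => ?_) (sum_le_sum fun i _ => ?_)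
  · rw [inner_add_left]; exact sq_abs_sub_abs_le_sq_add _ _
  · rw [inner_sub_left]; exact sq_abs_sub_abs_le_sq_sub _ _

lemma sq_le_sum_add_sum_of_lipschitz {κ : ℝ} (hκ : 0 ≤ κ)
    (hlip : ∀ x y : E, κ * min ‖x - y‖ ‖x + y‖ ≤
      ‖intensityMeasurement φ x - intensityMeasurement φ y‖)
    (J : Finset ι) {u v : E} (hu : ‖u‖ = 1) (hv : ‖v‖ = 1) :
    κ ^ 2 ≤ ∑ i ∈ J, ⟪u, φ i⟫ ^ 2 + ∑ i ∈ Jᶜ, ⟪v, φ i⟫ ^ 2 := by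
  have hadd : (u + v) + (u - v) = (2 : ℝ) • u := by module
  have hsub : (u + v) - (u - v) = (2 : ℝ) • v := by module
  have hmin : min ‖(u + v) - (u - v)‖ ‖(u + v) + (u - v)‖ = 2 := by
    simp [hadd, hsub, norm_smul, hu, hv]
  have hlip_uv := hlip (u + v) (u - v)
  rw [hmin] at hlip_uv
  have hbound := norm_intensityMeasurement_sub_sq_le φ J (u + v) (u - v)
  simp only [hadd, hsub, real_inner_smul_left, mul_pow, ← mul_sum] at hbound
  nlinarith [pow_le_pow_left₀ (by positivity) hlip_uv 2]

lemma isLowerFrameBound_or_compl_of_lipschitz {κ : ℝ} (hκ : 0 ≤ κ)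
    (hlip : ∀ x y : E, κ * min ‖x - y‖ ‖x + y‖ ≤
      ‖intensityMeasurement φ x - intensityMeasurement φ y‖)
    (J : Finset ι) :
    IsLowerFrameBound φ J (κ ^ 2 / 2) ∨ IsLowerFrameBound φ Jᶜ (κ ^ 2 / 2) := by
  by_contra! h
  obtain ⟨hJ, hJc⟩ := h
  refine hJc (isLowerFrameBound_of_norm_eq_one fun v hv => ?_)
  by_contra! hv_small
  refine hJ (isLowerFrameBound_of_norm_eq_one fun u hu => ?_)
  linarith [sq_le_sum_add_sum_of_lipschitz φ hκ hlip J hu hv]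

end Frame

theorem phase_retrieval_lipschitz_bounds_general
    {n : ℕ} {ι : Type*} [Fintype ι] [DecidableEq ι]
    (φ : ι → EuclideanSpace ℝ (Fin n))
    (M : EuclideanSpace ℝ (Fin n) → EuclideanSpace ℝ ι)
    (hM : ∀ x, M x = fun i : ι => |⟪x, φ i⟫|) :
    ((∀ A : ℝ, 0 ≤ A →
        (∀ x y : EuclideanSpace ℝ (Fin n),
          (∀ z : EuclideanSpace ℝ (Fin n),
            A * ‖z‖ ^ 2 ≤
              ∑ i ∈ univ.filter (fun i : ι => 0 ≤ ⟪x, φ i⟫ * ⟪y, φ i⟫), ⟪z, φ i⟫ ^ 2) ∨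
          (∀ z : EuclideanSpace ℝ (Fin n),
            A * ‖z‖ ^ 2 ≤
              ∑ i ∈ univ.filter (fun i : ι => ⟪x, φ i⟫ * ⟪y, φ i⟫ ≤ 0), ⟪z, φ i⟫ ^ 2)) →
        ∀ x y : EuclideanSpace ℝ (Fin n),
          A * (min ‖x - y‖ ‖x + y‖) ^ 2 ≤ ‖M x - M y‖ ^ 2) ∧
      (∀ κ : ℝ, 0 ≤ κ →
        (∀ x y : EuclideanSpace ℝ (Fin n),
          κ * min ‖x - y‖ ‖x + y‖ ≤ ‖M x - M y‖) →
        ∀ J : Finset ι,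
          (∀ z : EuclideanSpace ℝ (Fin n),
            κ ^ 2 / 2 * ‖z‖ ^ 2 ≤ ∑ i ∈ J, ⟪z, φ i⟫ ^ 2) ∨
          (∀ z : EuclideanSpace ℝ (Fin n),
            κ ^ 2 / 2 * ‖z‖ ^ 2 ≤ ∑ i ∈ Jᶜ, ⟪z, φ i⟫ ^ 2))) := by
  obtain rfl : M = intensityMeasurement φ := funext fun x => WithLp.ofLp_injective 2 (hM x)
  exact ⟨fun A hA h x y => mul_min_sq_le_norm_intensityMeasurement_sub_sq φ hA x y (h x y),
    fun κ hκ hlip J => isLowerFrameBound_or_compl_of_lipschitz φ hκ hlip J⟩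

/-- Lipschitz bounds for the intensity measurement operator
`M(x) = (|⟨x,φ_i⟩|)_i` on `ℝ^n/{±1}` with distance `min(‖x−y‖, ‖x+y‖)`:
(a) if for every pair `x, y` the number `A` is a lower frame bound of the subfamily
indexed by `I⁺(x,y)` or of the one indexed by `I⁻(x,y)`, then
`A·min(‖x−y‖,‖x+y‖)² ≤ ‖M(x) − M(y)‖²`;
(b) if `κ` is a lower Lipschitz bound of `M`, then for every `J ⊆ I` the number
`κ²/2` is a lower frame bound of the subfamily indexed by `J` or of the one indexed
by its complement (i.e. `(φ_i)` has the `(κ/√2)`-strong complement property). -/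
theorem phase_retrieval_lipschitz_bounds
    {n : ℕ} {ι : Type*} [Fintype ι] [DecidableEq ι]
    (φ : ι → EuclideanSpace ℝ (Fin n))
    (hframe : Submodule.span ℝ (Set.range φ) = ⊤)
    (M : EuclideanSpace ℝ (Fin n) → EuclideanSpace ℝ ι)
    (hM : ∀ x, M x = fun i : ι => |⟪x, φ i⟫|) :
    ((∀ A : ℝ, 0 ≤ A →
        (∀ x y : EuclideanSpace ℝ (Fin n),
          (∀ z : EuclideanSpace ℝ (Fin n),
            A * ‖z‖ ^ 2 ≤
              ∑ i ∈ univ.filter (fun i : ι => 0 ≤ ⟪x, φ i⟫ * ⟪y, φ i⟫), ⟪z, φ i⟫ ^ 2) ∨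
          (∀ z : EuclideanSpace ℝ (Fin n),
            A * ‖z‖ ^ 2 ≤
              ∑ i ∈ univ.filter (fun i : ι => ⟪x, φ i⟫ * ⟪y, φ i⟫ ≤ 0), ⟪z, φ i⟫ ^ 2)) →
        ∀ x y : EuclideanSpace ℝ (Fin n),
          A * (min ‖x - y‖ ‖x + y‖) ^ 2 ≤ ‖M x - M y‖ ^ 2) ∧
      (∀ κ : ℝ, 0 ≤ κ →
        (∀ x y : EuclideanSpace ℝ (Fin n),
          κ * min ‖x - y‖ ‖x + y‖ ≤ ‖M x - M y‖) →
        ∀ J : Finset ι,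
          (∀ z : EuclideanSpace ℝ (Fin n),
            κ ^ 2 / 2 * ‖z‖ ^ 2 ≤ ∑ i ∈ J, ⟪z, φ i⟫ ^ 2) ∨
          (∀ z : EuclideanSpace ℝ (Fin n),
            κ ^ 2 / 2 * ‖z‖ ^ 2 ≤ ∑ i ∈ Jᶜ, ⟪z, φ i⟫ ^ 2))) :=
  phase_retrieval_lipschitz_bounds_general φ M hM
end
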